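/- arXiv:2407.08729 — 2 statements merged into one kernel-verified Lean document; each statement's English description precedes it below -/
import Mathlib

section
/- (Output bi-equivariance of the channel-wise pairing map b.) Let C ≥ 1, let f_x, f_y : Fin C → ℝ³ with f_x c ≠ 0 and f_y c ≠ 0 for every channel c, and let ψ : (Fin C → ℝ) → (Fin C → ℝ) be any function. Define b(f_x, f_y) c = ψ(fun c' ↦ ‖f_x c' ⊗ f_y c'‖_F) c • ((f_x c ⊗ f_y c) / ‖f_x c ⊗ f_y c‖_F). Then for all R_x, R_y ∈ SO(3) and every channel c: b(fun c' ↦ R_x *ᵥ f_x c', fun c' ↦ R_y *ᵥ f_y c') c = R_x * b(f_x, f_y) c * R_yᵀ. -/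
/-! Rotating the inputs conjugates every outer product, `Rx u ⊗ Ry v = Rx (u ⊗ v) Ryᵀ`, and
conjugation by orthogonal matrices preserves the Frobenius norm. Hence the argument of `ψ` and the
normalising factors are unchanged, and the conjugation passes through the scalar multiplications. -/

/-- The Frobenius norm of a 3×3 real matrix: `‖F‖_F = √(Σᵢⱼ Fᵢⱼ²)`. -/
noncomputable def frobNorm (F : Matrix (Fin 3) (Fin 3) ℝ) : ℝ :=
  Real.sqrt (∑ i, ∑ j, (F i j) ^ 2)

namespace Matrix

variable {k l m n α : Type*} [Fintype m] [Fintype n]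

theorem vecMulVec_mulVec_mulVec [CommSemiring α] (R : Matrix l m α) (S : Matrix k n α)
    (u : m → α) (v : n → α) :
    vecMulVec (R *ᵥ u) (S *ᵥ v) = R * vecMulVec u v * Sᵀ := by
  rw [mul_vecMulVec, vecMulVec_mul, vecMul_transpose]

theorem trace_transpose_mul_self_conj [Fintype k] [Fintype l] [DecidableEq m]
    [DecidableEq n] [CommSemiring α] {R : Matrix l m α} {S : Matrix k n α}
    (hR : Rᵀ * R = 1) (hS : Sᵀ * S = 1) (M : Matrix m n α) :
    trace ((R * M * Sᵀ)ᵀ * (R * M * Sᵀ)) = trace (Mᵀ * M) :=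
  calc trace ((R * M * Sᵀ)ᵀ * (R * M * Sᵀ))
      = trace (S * (Mᵀ * (Rᵀ * R) * M * Sᵀ)) := by
        simp only [transpose_mul, transpose_transpose, Matrix.mul_assoc]
    _ = trace (Mᵀ * M * (Sᵀ * S)) := by
        rw [trace_mul_comm, hR, Matrix.mul_one, Matrix.mul_assoc]
    _ = trace (Mᵀ * M) := by rw [hS, Matrix.mul_one]

end Matrix

open Matrix

theorem frobNorm_eq_sqrt_trace (M : Matrix (Fin 3) (Fin 3) ℝ) :
    frobNorm M = √(trace (Mᵀ * M)) := by
  simp only [frobNorm, trace, diag, mul_apply, transpose_apply, sq]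
  rw [Finset.sum_comm]

theorem frobNorm_mul_mul_transpose {R S : Matrix (Fin 3) (Fin 3) ℝ}
    (hR : Rᵀ * R = 1) (hS : Sᵀ * S = 1) (M : Matrix (Fin 3) (Fin 3) ℝ) :
    frobNorm (R * M * Sᵀ) = frobNorm M := by
  rw [frobNorm_eq_sqrt_trace, frobNorm_eq_sqrt_trace, trace_transpose_mul_self_conj hR hS]

theorem pairing_map_output_biequivariant_general
    (C : ℕ)
    (fx fy : Fin C → Fin 3 → ℝ)
    (ψ : (Fin C → ℝ) → (Fin C → ℝ))
    (b : (Fin C → Fin 3 → ℝ) → (Fin C → Fin 3 → ℝ) → Fin C → Matrix (Fin 3) (Fin 3) ℝ)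
    (hb : ∀ (u v : Fin C → Fin 3 → ℝ) (c : Fin C),
      b u v c = ψ (fun c' => frobNorm (Matrix.vecMulVec (u c') (v c'))) c
        • ((frobNorm (Matrix.vecMulVec (u c) (v c)))⁻¹ • Matrix.vecMulVec (u c) (v c)))
    (Rx Ry : Matrix (Fin 3) (Fin 3) ℝ)
    (hRx : Rx.transpose * Rx = 1)
    (hRy : Ry.transpose * Ry = 1) :
    ∀ c : Fin C,
      b (fun c' => Rx.mulVec (fx c')) (fun c' => Ry.mulVec (fy c')) c
        = Rx * b fx fy c * Ry.transpose := by
  intro c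
  simp only [hb, vecMulVec_mulVec_mulVec, frobNorm_mul_mul_transpose hRx hRy,
    Matrix.mul_smul, Matrix.smul_mul]

/-- Output bi-equivariance of the channel-wise pairing map
`b(f_x, f_y) c = ψ(fun c' ↦ ‖f_x c' ⊗ f_y c'‖_F) c • ((f_x c ⊗ f_y c) / ‖f_x c ⊗ f_y c‖_F)`:
for `R_x, R_y ∈ SO(3)`, `b(R_x f_x, R_y f_y) c = R_x * b(f_x, f_y) c * R_yᵀ`. -/
theorem pairing_map_output_biequivariant
    (C : ℕ) (hC : 1 ≤ C)
    (fx fy : Fin C → Fin 3 → ℝ) (hfx : ∀ c, fx c ≠ 0) (hfy : ∀ c, fy c ≠ 0)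
    (ψ : (Fin C → ℝ) → (Fin C → ℝ))
    (b : (Fin C → Fin 3 → ℝ) → (Fin C → Fin 3 → ℝ) → Fin C → Matrix (Fin 3) (Fin 3) ℝ)
    (hb : ∀ (u v : Fin C → Fin 3 → ℝ) (c : Fin C),
      b u v c = ψ (fun c' => frobNorm (Matrix.vecMulVec (u c') (v c'))) c
        • ((frobNorm (Matrix.vecMulVec (u c) (v c)))⁻¹ • Matrix.vecMulVec (u c) (v c)))
    (Rx Ry : Matrix (Fin 3) (Fin 3) ℝ)
    (hRx : Rx.transpose * Rx = 1) (hdetx : Rx.det = 1)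
    (hRy : Ry.transpose * Ry = 1) (hdety : Ry.det = 1) :
    ∀ c : Fin C,
      b (fun c' => Rx.mulVec (fx c')) (fun c' => Ry.mulVec (fy c')) c
        = Rx * b fx fy c * Ry.transpose :=
  pairing_map_output_biequivariant_general C fx fy ψ b hb Rx Ry hRx hRy
end

section
/- (Proposition 5: equivariance of the alignment layer.) Let C ≥ 1, let f_x, f_y : Fin C → ℝ³ with f_x c ≠ 0 and f_y c ≠ 0 for every channel c, and let ψ : (Fin C → ℝ) → (Fin C → ℝ) be any function. Define b(f_x, f_y) c = ψ(fun c' ↦ ‖f_x c' ⊗ f_y c'‖_F) c • ((f_x c ⊗ f_y c) / ‖f_x c ⊗ f_y c‖_F), and the alignment layer a(f_x, f_y) c = (b(f_x, f_y) c) *ᵥ (f_y c). Then for all R_x, R_y ∈ SO(3) and every channel c: a(fun c' ↦ R_x *ᵥ f_x c', fun c' ↦ R_y *ᵥ f_y c') c = R_x *ᵥ (a(f_x, f_y) c). In particular the alignment layer is equivariant to rotations of its first input and invariant to rotations of its second input. -/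
open Matrix

section TransposeMulSelf

variable {m n R : Type*} [Fintype m] [Fintype n] [DecidableEq n] [CommSemiring R]
  {Q : Matrix n n R}

theorem dotProduct_mulVec_mulVec_of_transpose_mul_self (hQ : Qᵀ * Q = 1) (v w : n → R) :
    (Q *ᵥ v) ⬝ᵥ (Q *ᵥ w) = v ⬝ᵥ w := by
  rw [dotProduct_mulVec, ← vecMul_transpose, vecMul_vecMul, hQ, vecMul_one]

theorem vecMulVec_mulVec_mulVec_of_transpose_mul_self (hQ : Qᵀ * Q = 1) (P : Matrix m m R)
    (u : m → R) (v w : n → R) :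
    vecMulVec (P *ᵥ u) (Q *ᵥ v) *ᵥ (Q *ᵥ w) = P *ᵥ (vecMulVec u v *ᵥ w) := by
  rw [vecMulVec_mulVec, vecMulVec_mulVec, dotProduct_mulVec_mulVec_of_transpose_mul_self hQ,
    op_smul_eq_smul, op_smul_eq_smul, mulVec_smul]

end TransposeMulSelf

theorem frobNorm_vecMulVec (u v : Fin 3 → ℝ) :
    frobNorm (vecMulVec u v) = √((u ⬝ᵥ u) * (v ⬝ᵥ v)) := by
  simp only [frobNorm, vecMulVec_apply, mul_pow, dotProduct, ← sq, Fintype.sum_mul_sum]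

theorem frobNorm_vecMulVec_mulVec_mulVec {P Q : Matrix (Fin 3) (Fin 3) ℝ}
    (hP : Pᵀ * P = 1) (hQ : Qᵀ * Q = 1) (u v : Fin 3 → ℝ) :
    frobNorm (vecMulVec (P *ᵥ u) (Q *ᵥ v)) = frobNorm (vecMulVec u v) := by
  simp only [frobNorm_vecMulVec, dotProduct_mulVec_mulVec_of_transpose_mul_self hP,
    dotProduct_mulVec_mulVec_of_transpose_mul_self hQ]

theorem alignment_layer_equivariance_general
    (C : ℕ)
    (fx fy : Fin C → Fin 3 → ℝ)
    (ψ : (Fin C → ℝ) → (Fin C → ℝ))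
    (b : (Fin C → Fin 3 → ℝ) → (Fin C → Fin 3 → ℝ) → Fin C → Matrix (Fin 3) (Fin 3) ℝ)
    (hb : ∀ (u v : Fin C → Fin 3 → ℝ) (c : Fin C),
      b u v c = ψ (fun c' => frobNorm (Matrix.vecMulVec (u c') (v c'))) c
        • ((frobNorm (Matrix.vecMulVec (u c) (v c)))⁻¹ • Matrix.vecMulVec (u c) (v c)))
    (a : (Fin C → Fin 3 → ℝ) → (Fin C → Fin 3 → ℝ) → Fin C → Fin 3 → ℝ)
    (ha : ∀ (u v : Fin C → Fin 3 → ℝ) (c : Fin C), a u v c = (b u v c).mulVec (v c))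
    (Rx Ry : Matrix (Fin 3) (Fin 3) ℝ)
    (hRx : Rx.transpose * Rx = 1)
    (hRy : Ry.transpose * Ry = 1) :
    ∀ c : Fin C,
      a (fun c' => Rx.mulVec (fx c')) (fun c' => Ry.mulVec (fy c')) c
        = Rx.mulVec (a fx fy c) := by
  intro c
  have hweights : (fun c' => frobNorm (vecMulVec (Rx *ᵥ fx c') (Ry *ᵥ fy c')))
      = fun c' => frobNorm (vecMulVec (fx c') (fy c')) :=
    funext fun c' => frobNorm_vecMulVec_mulVec_mulVec hRx hRy (fx c') (fy c')
  rw [ha, ha, hb, hb, hweights, frobNorm_vecMulVec_mulVec_mulVec hRx hRy]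
  simp only [smul_mulVec, mulVec_smul, vecMulVec_mulVec_mulVec_of_transpose_mul_self hRy]

/-- Proposition 5: equivariance of the alignment layer
`a(f_x, f_y) c = b(f_x, f_y) c *ᵥ f_y c`, where
`b(f_x, f_y) c = ψ(fun c' ↦ ‖f_x c' ⊗ f_y c'‖_F) c • ((f_x c ⊗ f_y c) / ‖f_x c ⊗ f_y c‖_F)`.
For all `R_x, R_y ∈ SO(3)`, `a(R_x f_x, R_y f_y) c = R_x *ᵥ a(f_x, f_y) c`: the alignment
layer is equivariant to rotations of its first input and invariant to rotations of its
second input. -/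
theorem alignment_layer_equivariance
    (C : ℕ) (hC : 1 ≤ C)
    (fx fy : Fin C → Fin 3 → ℝ) (hfx : ∀ c, fx c ≠ 0) (hfy : ∀ c, fy c ≠ 0)
    (ψ : (Fin C → ℝ) → (Fin C → ℝ))
    (b : (Fin C → Fin 3 → ℝ) → (Fin C → Fin 3 → ℝ) → Fin C → Matrix (Fin 3) (Fin 3) ℝ)
    (hb : ∀ (u v : Fin C → Fin 3 → ℝ) (c : Fin C),
      b u v c = ψ (fun c' => frobNorm (Matrix.vecMulVec (u c') (v c'))) c
        • ((frobNorm (Matrix.vecMulVec (u c) (v c)))⁻¹ • Matrix.vecMulVec (u c) (v c)))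
    (a : (Fin C → Fin 3 → ℝ) → (Fin C → Fin 3 → ℝ) → Fin C → Fin 3 → ℝ)
    (ha : ∀ (u v : Fin C → Fin 3 → ℝ) (c : Fin C), a u v c = (b u v c).mulVec (v c))
    (Rx Ry : Matrix (Fin 3) (Fin 3) ℝ)
    (hRx : Rx.transpose * Rx = 1) (hdetx : Rx.det = 1)
    (hRy : Ry.transpose * Ry = 1) (hdety : Ry.det = 1) :
    ∀ c : Fin C,
      a (fun c' => Rx.mulVec (fx c')) (fun c' => Ry.mulVec (fy c')) c
        = Rx.mulVec (a fx fy c) :=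
  alignment_layer_equivariance_general C fx fy ψ b hb a ha Rx Ry hRx hRy
end
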